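/- arXiv:2006.04041 — 4 statements merged into one kernel-verified Lean document; each statement's English description precedes it below -/
import Mathlib

section
/- Let Θ' be a nonempty set of auxiliary parameters and, for each θ' ∈ Θ', let f(·, θ') : ℝ^{p₂×p₁} → ℝ be a function of a p₂×p₁ real matrix W that is differentiable at the zero matrix, with gradient matrix g₀(θ') = ∇_W f(O, θ'). If λ > sup_{θ' ∈ Θ'} ‖g₀(θ')‖∞ (the supremum over θ' of the largest absolute entry of the gradient at the zero matrix), then for every θ' ∈ Θ' the zero matrix O is a local minimum of the penalized objective W ↦ f(W, θ') + λ·‖W‖₁, where ‖W‖₁ denotes the sum of the absolute values of all entries of W. -/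
/-- Let `Θ'` be a nonempty set of auxiliary parameters and, for each
`θ' : Θ'`, let `f (·, θ')` be a function of a `p₂ × p₁` real matrix `W`
(modeled as `Fin p₂ → Fin p₁ → ℝ`, whose Pi norm is exactly the entrywise ℓ∞ norm),
differentiable at the zero matrix with gradient matrix `g θ'` (expressed via the
Fréchet derivative `L θ'` acting as `W ↦ ∑ j k, g θ' j k * W j k`).
If `λ > sup_{θ'} ‖g θ'‖∞`, then for every `θ'` the zero matrix is a local minimum
of `W ↦ f W θ' + λ * ‖W‖₁`, where `‖W‖₁ = ∑ j k, |W j k|`. -/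
theorem zero_matrix_isLocalMin_of_l1_penalty
    (p₁ p₂ : ℕ) (Θ' : Type*) [Nonempty Θ']
    (f : (Fin p₂ → Fin p₁ → ℝ) → Θ' → ℝ)
    (g : Θ' → Fin p₂ → Fin p₁ → ℝ)
    (L : Θ' → ((Fin p₂ → Fin p₁ → ℝ) →L[ℝ] ℝ))
    (hL : ∀ θ' W, L θ' W = ∑ j, ∑ k, g θ' j k * W j k)
    (hf : ∀ θ', HasFDerivAt (fun W => f W θ') (L θ') 0)
    (lam : ℝ)
    (hbdd : BddAbove (Set.range fun θ' => ‖g θ'‖))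
    (hlam : (⨆ θ', ‖g θ'‖) < lam) :
    ∀ θ', IsLocalMin (fun W : Fin p₂ → Fin p₁ → ℝ =>
      f W θ' + lam * ∑ j, ∑ k, |W j k|) 0 := by
  intro θ'
  set G := ‖g θ'‖ with hGdef
  have hG0 : 0 ≤ G := norm_nonneg _
  have hGlam : G < lam := lt_of_le_of_lt (le_ciSup hbdd θ') hlam
  have hε : (0:ℝ) < lam - G := by linarith
  have hlo := (hf θ').isLittleO
  rw [Asymptotics.isLittleO_iff] at hlo
  have h := hlo hε
  unfold IsLocalMin IsMinFilter
  filter_upwards [h] with W hW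
  simp only [sub_zero] at hW
  have hS0 : (0:ℝ) ≤ ∑ j, ∑ k, |W j k| :=
    Finset.sum_nonneg fun j _ => Finset.sum_nonneg fun k _ => abs_nonneg _
  set S := ∑ j, ∑ k, |W j k| with hSdef
  -- ‖W‖ ≤ S
  have hnorm : ‖W‖ ≤ S := by
    refine (pi_norm_le_iff_of_nonneg hS0).2 fun j => ?_
    have h1 : ‖W j‖ ≤ ∑ k, |W j k| := by
      refine (pi_norm_le_iff_of_nonneg (Finset.sum_nonneg fun k _ => abs_nonneg _)).2 fun k => ?_
      rw [Real.norm_eq_abs]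
      exact Finset.single_le_sum (fun k _ => abs_nonneg (W j k)) (Finset.mem_univ k)
    refine le_trans h1 ?_
    exact Finset.single_le_sum (f := fun j => ∑ k, |W j k|) (fun j _ => Finset.sum_nonneg fun k _ => abs_nonneg _)
        (Finset.mem_univ j)
  -- |L θ' W| ≤ G * S
  have hgle : ∀ j k, |g θ' j k| ≤ G := by
    intro j k
    calc |g θ' j k| = ‖g θ' j k‖ := rfl
      _ ≤ ‖g θ' j‖ := norm_le_pi_norm (g θ' j) k
      _ ≤ G := norm_le_pi_norm (g θ') j
  have hLW : |L θ' W| ≤ G * S := by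
    rw [hL θ' W, hSdef, Finset.mul_sum]
    refine le_trans (Finset.abs_sum_le_sum_abs _ _) (Finset.sum_le_sum fun j _ => ?_)
    rw [Finset.mul_sum]
    refine le_trans (Finset.abs_sum_le_sum_abs _ _) (Finset.sum_le_sum fun k _ => ?_)
    rw [abs_mul]
    exact mul_le_mul_of_nonneg_right (hgle j k) (abs_nonneg _)
  -- conclude
  have hW' : |f W θ' - f 0 θ' - L θ' W| ≤ (lam - G) * S := by
    refine le_trans ?_ (mul_le_mul_of_nonneg_left hnorm (le_of_lt hε))
    simpa [Real.norm_eq_abs] using hW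
  simp only [Pi.zero_apply, abs_zero, Finset.sum_const_zero, mul_zero, add_zero]
  have h1 := abs_le.1 hW'
  have h2 := abs_le.1 hLW
  nlinarith [h1.1, h2.1]
end

section
/- Fix an activation function σ : ℝ → ℝ that is differentiable at 0 with σ(0) = 0, training inputs x₁,…,x_n ∈ ℝ^{p₁} and responses y ∈ ℝⁿ with y not a constant vector (y ≠ ȳ·1, where ȳ = (1/n)∑ᵢ yᵢ). For a p₂×p₁ matrix W₁ and a nonzero vector w₂ ∈ ℝ^{p₂}, define the two-layer network prediction μ_{W₁,w₂}(x) = ȳ + ⟨w₂, σ(W₁x)⟩/‖w₂‖₂ (σ applied componentwise) and the square-root loss L(W₁; w₂) = ‖y − (μ_{W₁,w₂}(xᵢ))_{i=1}^n‖₂. If λ > σ'(0)·max_{k=1,…,p₁} |∑_{i=1}^n x_{i,k}(yᵢ − ȳ)| / ‖y − ȳ·1‖₂, then for every nonzero w₂ ∈ ℝ^{p₂}, the zero matrix is a local minimum of W₁ ↦ L(W₁; w₂) + λ·‖W₁‖₁, where ‖W₁‖₁ is the sum of absolute values of the entries of W₁. -/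
/-- Two-layer network with activation `σ` (differentiable at 0 with
`σ 0 = 0` and, per the paper's activation function requirement, `σ'(0) = s > 0`),
inputs `x i : Fin p₁ → ℝ`, responses `y` with `y ≠ ȳ·1`.
Prediction: `μ_{W₁,w₂}(x) = ȳ + ⟨w₂, σ(W₁ x)⟩ / ‖w₂‖₂`, square-root loss
`L(W₁) = ‖y − μ(xᵢ)‖₂`.  If `λ > σ'(0) · max_k |∑ᵢ x_{i,k}(yᵢ − ȳ)| / ‖y − ȳ·1‖₂`,
then for every nonzero `w₂` the zero matrix is a local minimum of
`W₁ ↦ L(W₁; w₂) + λ‖W₁‖₁`. -/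
theorem zero_matrix_isLocalMin_two_layer
    (n p₁ p₂ : ℕ) (hp₁ : 0 < p₁)
    (σ : ℝ → ℝ) (s : ℝ) (hσ : HasDerivAt σ s 0) (hσ0 : σ 0 = 0) (hs : 0 < s)
    (x : Fin n → Fin p₁ → ℝ) (y : Fin n → ℝ)
    (ybar : ℝ) (hybar : ybar = (∑ i, y i) / n)
    (hy : y ≠ fun _ => ybar)
    (lam : ℝ)
    (hlam : s * (Finset.univ.sup'
        (Finset.univ_nonempty_iff.mpr (Fin.pos_iff_nonempty.mp hp₁))
        fun k => |∑ i, x i k * (y i - ybar)|) /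
        Real.sqrt (∑ i, (y i - ybar) ^ 2) < lam) :
    ∀ w₂ : Fin p₂ → ℝ, w₂ ≠ 0 →
      IsLocalMin (fun W₁ : Fin p₂ → Fin p₁ → ℝ =>
        Real.sqrt (∑ i, (y i - (ybar +
          (∑ j, w₂ j * σ (∑ k, W₁ j k * x i k)) / Real.sqrt (∑ j, (w₂ j) ^ 2))) ^ 2)
        + lam * ∑ j, ∑ k, |W₁ j k|) 0 := by
  intro w₂ hw₂
  set e : Fin n → ℝ := fun i => y i - ybar with he
  -- positivity of r
  have hr2 : 0 < ∑ i, e i ^ 2 := by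
    rcases (Finset.sum_nonneg (fun i _ => sq_nonneg (e i))).lt_or_eq with h | h
    · exact h
    · exfalso
      apply hy
      funext i
      have := (Finset.sum_eq_zero_iff_of_nonneg (fun i _ => sq_nonneg (e i))).mp h.symm i
        (Finset.mem_univ i)
      have h0 : e i = 0 := by
        have := sq_eq_zero_iff.mp this
        exact this
      simpa [he, sub_eq_zero] using h0
  set r := Real.sqrt (∑ i, e i ^ 2) with hrdef
  have hr : 0 < r := Real.sqrt_pos.mpr hr2
  set c := Real.sqrt (∑ j, (w₂ j) ^ 2) with hcdef
  have hc2 : 0 < ∑ j, (w₂ j) ^ 2 := by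
    rcases (Finset.sum_nonneg (fun j _ => sq_nonneg (w₂ j))).lt_or_eq with h | h
    · exact h
    · exfalso
      apply hw₂
      funext j
      have := (Finset.sum_eq_zero_iff_of_nonneg (fun j _ => sq_nonneg (w₂ j))).mp h.symm j
        (Finset.mem_univ j)
      exact sq_eq_zero_iff.mp this
  have hc : 0 < c := Real.sqrt_pos.mpr hc2
  have hwle : ∀ j, |w₂ j| ≤ c := by
    intro j
    rw [← Real.sqrt_sq_eq_abs]
    exact Real.sqrt_le_sqrt (Finset.single_le_sum (fun j _ => sq_nonneg (w₂ j))
      (Finset.mem_univ j))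
  set M := (Finset.univ.sup'
      (Finset.univ_nonempty_iff.mpr (Fin.pos_iff_nonempty.mp hp₁))
      fun k => |∑ i, x i k * e i|) with hMdef
  have hMk : ∀ k, |∑ i, x i k * e i| ≤ M := fun k =>
    Finset.le_sup' (fun k => |∑ i, x i k * e i|) (Finset.mem_univ k)
  obtain ⟨k₀⟩ := Fin.pos_iff_nonempty.mp hp₁
  have hM0 : 0 ≤ M := le_trans (abs_nonneg _) (hMk k₀)
  have hsM : s * M < lam * r := by
    rw [div_lt_iff₀ hr] at hlam
    exact hlam
  set A := ∑ i, ∑ k, |e i| * |x i k| with hAdef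
  have hA0 : 0 ≤ A := Finset.sum_nonneg fun i _ => Finset.sum_nonneg fun k _ =>
    mul_nonneg (abs_nonneg _) (abs_nonneg _)
  set ε := (lam * r - s * M) / (A + 1) with hεdef
  have hε : 0 < ε := div_pos (by linarith) (by linarith)
  have hεA : s * M + ε * A < lam * r := by
    have h1 : ε * A < lam * r - s * M := by
      rw [hεdef]
      rw [div_mul_eq_mul_div, div_lt_iff₀ (by linarith : (0:ℝ) < A + 1)]
      nlinarith [hsM]
    linarith
  -- ε-δ from derivative
  have hder : ∃ δ > 0, ∀ t : ℝ, |t| < δ → |σ t - s * t| ≤ ε * |t| := by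
    have h := hasDerivAt_iff_isLittleO.mp hσ
    have h2 := h.def hε
    rw [Metric.eventually_nhds_iff] at h2
    obtain ⟨δ, hδ, h3⟩ := h2
    refine ⟨δ, hδ, fun t ht => ?_⟩
    have := h3 (show dist t 0 < δ by simpa [Real.dist_eq] using ht)
    simpa [hσ0, Real.norm_eq_abs, smul_eq_mul, mul_comm] using this
  obtain ⟨δ, hδ, hσδ⟩ := hder
  set B := (∑ i, ∑ k, |x i k|) + 1 with hBdef
  have hB : 0 < B := by
    have : 0 ≤ ∑ i, ∑ k, |x i k| := Finset.sum_nonneg fun i _ =>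
      Finset.sum_nonneg fun k _ => abs_nonneg _
    linarith
  have hBi : ∀ i, ∑ k, |x i k| ≤ B := by
    intro i
    have h1 : ∑ k, |x i k| ≤ ∑ i, ∑ k, |x i k| :=
      Finset.single_le_sum (f := fun i => ∑ k, |x i k|)
        (fun i _ => Finset.sum_nonneg fun k _ => abs_nonneg _) (Finset.mem_univ i)
    linarith
  set η := δ / (2 * B) with hηdef
  have hη : 0 < η := div_pos hδ (by linarith)
  have hball : Metric.ball (0 : Fin p₂ → Fin p₁ → ℝ) η ∈
      nhds (0 : Fin p₂ → Fin p₁ → ℝ) := Metric.ball_mem_nhds 0 hη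
  filter_upwards [hball] with W hW
  -- entrywise bound
  have hWb : ∀ j k, |W j k| < η := by
    intro j k
    have h1 : dist W 0 < η := Metric.mem_ball.mp hW
    have h2 := (dist_pi_lt_iff hη).mp h1 j
    have h3 := (dist_pi_lt_iff hη).mp h2 k
    simpa [Real.dist_eq] using h3
  -- bound on preactivations
  have htb : ∀ i j, |∑ k, W j k * x i k| < δ := by
    intro i j
    calc |∑ k, W j k * x i k| ≤ ∑ k, |W j k * x i k| := Finset.abs_sum_le_sum_abs _ _
      _ ≤ ∑ k, η * |x i k| := by
          refine Finset.sum_le_sum fun k _ => ?_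
          rw [abs_mul]
          exact mul_le_mul_of_nonneg_right (hWb j k).le (abs_nonneg _)
      _ = η * ∑ k, |x i k| := by rw [Finset.mul_sum]
      _ ≤ η * B := mul_le_mul_of_nonneg_left (hBi i) hη.le
      _ = δ / 2 := by rw [hηdef]; field_simp
      _ < δ := by linarith
  set T : Fin n → Fin p₂ → ℝ := fun i j => ∑ k, W j k * x i k with hT
  set G : Fin n → ℝ := fun i => (∑ j, w₂ j * σ (T i j)) / c with hG
  set R : ℝ := ∑ j, ∑ k, |W j k| with hR
  have hR0 : 0 ≤ R := Finset.sum_nonneg fun j _ => Finset.sum_nonneg fun k _ => abs_nonneg _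
  have hRj : ∀ (j : Fin p₂) (k : Fin p₁), |W j k| ≤ ∑ k, |W j k| := fun j k =>
    Finset.single_le_sum (f := fun k => |W j k|) (fun k _ => abs_nonneg _) (Finset.mem_univ k)
  -- per-row bound
  have hrow : ∀ j, |∑ i, e i * σ (T i j)| ≤ (s * M + ε * A) * (∑ k, |W j k|) := by
    intro j
    have h1 : ∑ i, e i * T i j = ∑ k, W j k * (∑ i, x i k * e i) := by
      simp only [hT, Finset.mul_sum]
      rw [Finset.sum_comm]
      exact Finset.sum_congr rfl fun k _ => Finset.sum_congr rfl fun i _ => by ring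
    have h2 : |∑ k, W j k * (∑ i, x i k * e i)| ≤ M * ∑ k, |W j k| := by
      calc |∑ k, W j k * (∑ i, x i k * e i)|
          ≤ ∑ k, |W j k| * |∑ i, x i k * e i| := by
            refine (Finset.abs_sum_le_sum_abs _ _).trans ?_
            exact le_of_eq (Finset.sum_congr rfl fun k _ => abs_mul _ _)
        _ ≤ ∑ k, |W j k| * M := Finset.sum_le_sum fun k _ =>
            mul_le_mul_of_nonneg_left (hMk k) (abs_nonneg _)
        _ = M * ∑ k, |W j k| := by rw [← Finset.sum_mul]; ring
    have hTb : ∀ i, |T i j| ≤ (∑ k, |x i k|) * (∑ k, |W j k|) := by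
      intro i
      calc |T i j| ≤ ∑ k, |W j k * x i k| := Finset.abs_sum_le_sum_abs _ _
        _ ≤ ∑ k, (∑ k', |W j k'|) * |x i k| := by
            refine Finset.sum_le_sum fun k _ => ?_
            rw [abs_mul]
            exact mul_le_mul_of_nonneg_right (hRj j k) (abs_nonneg _)
        _ = (∑ k, |x i k|) * (∑ k, |W j k|) := by rw [← Finset.mul_sum]; ring
    have h3 : |∑ i, e i * (σ (T i j) - s * T i j)| ≤ ε * A * (∑ k, |W j k|) := by
      calc |∑ i, e i * (σ (T i j) - s * T i j)|
          ≤ ∑ i, |e i| * (ε * |T i j|) := by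
            refine (Finset.abs_sum_le_sum_abs _ _).trans (Finset.sum_le_sum fun i _ => ?_)
            rw [abs_mul]
            exact mul_le_mul_of_nonneg_left (hσδ _ (htb i j)) (abs_nonneg _)
        _ ≤ ∑ i, |e i| * (ε * ((∑ k, |x i k|) * (∑ k, |W j k|))) := by
            refine Finset.sum_le_sum fun i _ => ?_
            exact mul_le_mul_of_nonneg_left
              (mul_le_mul_of_nonneg_left (hTb i) hε.le) (abs_nonneg _)
        _ = ε * A * (∑ k, |W j k|) := by
            have e1 : ∀ i : Fin n, |e i| * (ε * ((∑ k, |x i k|) * (∑ k, |W j k|)))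
                = (ε * (∑ k, |e i| * |x i k|)) * (∑ k, |W j k|) := fun i => by
              rw [← Finset.mul_sum]; ring
            rw [Finset.sum_congr rfl fun i _ => e1 i, ← Finset.sum_mul, ← Finset.mul_sum,
              hAdef]
    have hsplit : ∑ i, e i * σ (T i j)
        = s * (∑ k, W j k * (∑ i, x i k * e i)) + ∑ i, e i * (σ (T i j) - s * T i j) := by
      rw [← h1, Finset.mul_sum, ← Finset.sum_add_distrib]
      exact Finset.sum_congr rfl fun i _ => by ring
    calc |∑ i, e i * σ (T i j)|
        ≤ s * (M * ∑ k, |W j k|) + ε * A * (∑ k, |W j k|) := by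
          rw [hsplit]
          refine (abs_add_le _ _).trans (add_le_add ?_ h3)
          rw [abs_mul, abs_of_pos hs]
          exact mul_le_mul_of_nonneg_left h2 hs.le
      _ = (s * M + ε * A) * (∑ k, |W j k|) := by ring
  -- global bound on the inner product
  have hkey : ∑ i, e i * G i ≤ lam * r * R := by
    have h4a : ∑ i, e i * G i = (∑ i, e i * (∑ j, w₂ j * σ (T i j))) / c := by
      rw [Finset.sum_div]
      exact Finset.sum_congr rfl fun i _ => by simp only [hG]; ring
    have h4b : ∑ i, e i * (∑ j, w₂ j * σ (T i j))
        = ∑ j, w₂ j * (∑ i, e i * σ (T i j)) := by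
      simp only [Finset.mul_sum]
      rw [Finset.sum_comm]
      exact Finset.sum_congr rfl fun j _ => Finset.sum_congr rfl fun i _ => by ring
    have h4 : ∑ i, e i * G i = (∑ j, w₂ j * (∑ i, e i * σ (T i j))) / c := by
      rw [h4a, h4b]
    have h5 : ∑ j, w₂ j * (∑ i, e i * σ (T i j)) ≤ c * ((s * M + ε * A) * R) := by
      calc ∑ j, w₂ j * (∑ i, e i * σ (T i j))
          ≤ ∑ j, |w₂ j * (∑ i, e i * σ (T i j))| :=
            Finset.sum_le_sum fun j _ => le_abs_self _
        _ ≤ ∑ j, c * ((s * M + ε * A) * (∑ k, |W j k|)) := by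
            refine Finset.sum_le_sum fun j _ => ?_
            rw [abs_mul]
            exact mul_le_mul (hwle j) (hrow j) (abs_nonneg _) hc.le
        _ = c * ((s * M + ε * A) * R) := by
            rw [hR, ← Finset.mul_sum, ← Finset.mul_sum]
    rw [h4, div_le_iff₀ hc]
    calc ∑ j, w₂ j * (∑ i, e i * σ (T i j)) ≤ c * ((s * M + ε * A) * R) := h5
      _ ≤ lam * r * R * c := by nlinarith [mul_nonneg hR0 hc.le, hεA]
  have hQ : (∑ i, e i * G i) / r ≤ lam * R := by
    rw [div_le_iff₀ hr]
    calc ∑ i, e i * G i ≤ lam * r * R := hkey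
      _ = lam * R * r := by ring
  -- Cauchy–Schwarz lower bound for the loss
  have hCS : r - (∑ i, e i * G i) / r ≤ Real.sqrt (∑ i, (e i - G i) ^ 2) := by
    have h6 : ∑ i, e i * (e i - G i)
        ≤ r * Real.sqrt (∑ i, (e i - G i) ^ 2) := by
      have := Real.sum_mul_le_sqrt_mul_sqrt Finset.univ e (fun i => e i - G i)
      simpa [hrdef] using this
    have h7 : ∑ i, e i * (e i - G i) = (∑ i, e i ^ 2) - ∑ i, e i * G i := by
      rw [← Finset.sum_sub_distrib]
      exact Finset.sum_congr rfl fun i _ => by ring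
    have h8 : (∑ i, e i ^ 2) = r ^ 2 := (Real.sq_sqrt hr2.le).symm
    have h10 : r - (∑ i, e i * G i) / r = (r ^ 2 - ∑ i, e i * G i) / r := by
      field_simp
    rw [h10, div_le_iff₀ hr]
    calc r ^ 2 - ∑ i, e i * G i = ∑ i, e i * (e i - G i) := by rw [← h8, ← h7]
      _ ≤ r * Real.sqrt (∑ i, (e i - G i) ^ 2) := h6
      _ = Real.sqrt (∑ i, (e i - G i) ^ 2) * r := mul_comm _ _
  -- value at zero
  have h0val : Real.sqrt (∑ i, (y i - (ybar +
      (∑ j, w₂ j * σ (∑ k, (0 : Fin p₂ → Fin p₁ → ℝ) j k * x i k)) / c)) ^ 2)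
      + lam * ∑ j, ∑ k, |(0 : Fin p₂ → Fin p₁ → ℝ) j k| = r := by
    simp [hσ0, hrdef, he]
  have hWval : Real.sqrt (∑ i, (y i - (ybar +
      (∑ j, w₂ j * σ (∑ k, W j k * x i k)) / c)) ^ 2)
      = Real.sqrt (∑ i, (e i - G i) ^ 2) := by
    congr 1
    refine Finset.sum_congr rfl fun i _ => ?_
    simp only [hG, hT, he]
    ring
  have hL : Real.sqrt (∑ i, (y i - ybar) ^ 2) = r := by
    rw [hrdef]
  simp only [Pi.zero_apply, zero_mul, Finset.sum_const_zero, hσ0, mul_zero, zero_div,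
    abs_zero, add_zero]
  rw [hL, hWval]
  linarith [hCS, hQ, hR.le, hR.ge]
end

section
/- Fix an activation function σ : ℝ → ℝ that is differentiable at 0 with σ(0) = 0, training inputs x₁,…,x_n ∈ ℝ^{p₁}, responses y ∈ ℝⁿ with y ≠ ȳ·1 (ȳ = (1/n)∑ᵢ yᵢ), and a nonzero vector w₂ ∈ ℝ^{p₂}. Define μ_{W₁}(x) = ȳ + ⟨w₂, σ(W₁x)⟩/‖w₂‖₂ and L(W₁) = ‖y − (μ_{W₁}(xᵢ))_{i=1}^n‖₂ as a function of the p₂×p₁ matrix W₁. Then L is differentiable at the zero matrix, and its gradient there is the p₂×p₁ matrix G with entries G_{jk} = −σ'(0) · (w_{2,j}/‖w₂‖₂) · (∑_{i=1}^n x_{i,k}(yᵢ − ȳ)) / ‖y − ȳ·1‖₂. -/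
/-! At `W₁ = 0` every residual `yᵢ − μ(xᵢ)` equals `yᵢ − ȳ` because `σ 0 = 0`, so the loss is
the Euclidean norm of a vector that does not vanish there, and the chain rule gives its derivative
as `‖r(0)‖⁻¹ ∑ᵢ rᵢ(0) rᵢ'`. Each `rᵢ'` is `−σ'(0)/‖w₂‖` times the rank-one matrix `w₂ xᵢᵀ`. -/

open Finset

section FrobeniusPairing

variable {ι κ : Type*}

noncomputable def matrixEntryCLM (j : ι) (k : κ) : (ι → κ → ℝ) →L[ℝ] ℝ :=
  (ContinuousLinearMap.proj (R := ℝ) (φ := fun _ : κ => ℝ) k).comp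
    (ContinuousLinearMap.proj (R := ℝ) (φ := fun _ : ι => κ → ℝ) j)

theorem hasFDerivAt_matrixEntry (j : ι) (k : κ) (W : ι → κ → ℝ) :
    HasFDerivAt (fun V : ι → κ → ℝ => V j k) (matrixEntryCLM j k) W :=
  (matrixEntryCLM j k).hasFDerivAt

variable [Fintype ι] [Fintype κ]

noncomputable def frobeniusPairing (A : ι → κ → ℝ) : (ι → κ → ℝ) →L[ℝ] ℝ :=
  ∑ j, ∑ k, A j k • matrixEntryCLM j k

@[simp]
theorem frobeniusPairing_apply (A W : ι → κ → ℝ) :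
    frobeniusPairing A W = ∑ j, ∑ k, A j k * W j k := by
  simp [frobeniusPairing, matrixEntryCLM]

theorem hasFDerivAt_dotProduct_activation_mulVec {σ σ' : ℝ → ℝ} (w : ι → ℝ) (x : κ → ℝ)
    (W : ι → κ → ℝ)
    (hσ : ∀ j, HasDerivAt σ (σ' (∑ k, W j k * x k)) (∑ k, W j k * x k)) :
    HasFDerivAt (fun V : ι → κ → ℝ => ∑ j, w j * σ (∑ k, V j k * x k))
      (frobeniusPairing fun j k => w j * σ' (∑ k', W j k' * x k') * x k) W := by
  have hpre : ∀ j, HasFDerivAt (fun V : ι → κ → ℝ => ∑ k, V j k * x k)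
      (∑ k, x k • matrixEntryCLM j k) W :=
    fun j => HasFDerivAt.fun_sum fun k _ => (hasFDerivAt_matrixEntry j k W).mul_const (x k)
  refine (HasFDerivAt.fun_sum fun j _ => ((hσ j).comp_hasFDerivAt W (hpre j)).const_mul (w j))
    |>.congr_fderiv ?_
  ext V
  simp [matrixEntryCLM, mul_sum, mul_assoc, mul_left_comm]

end FrobeniusPairing

theorem HasFDerivAt.sqrt_sum_sq {E ι : Type*} [NormedAddCommGroup E] [NormedSpace ℝ E]
    [Fintype ι] {f : ι → E → ℝ} {f' : ι → E →L[ℝ] ℝ} {a : E}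
    (hf : ∀ i, HasFDerivAt (f i) (f' i) a) (ha : ∑ i, f i a ^ 2 ≠ 0) :
    HasFDerivAt (fun v => √(∑ i, f i v ^ 2)) ((√(∑ i, f i a ^ 2))⁻¹ • ∑ i, f i a • f' i) a := by
  refine ((HasFDerivAt.fun_sum fun i _ => (hf i).pow 2).sqrt ha).congr_fderiv ?_
  ext v
  simp only [one_div, mul_inv_rev, Nat.add_one_sub_one, pow_one, nsmul_eq_mul, Nat.cast_ofNat,
    smul_sum, _root_.sum_apply, smul_apply, smul_eq_mul]
  exact sum_congr rfl fun i _ => by ring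

theorem gradient_sqrt_l2_loss_at_zero_general
    (n p₁ p₂ : ℕ)
    (σ : ℝ → ℝ) (s : ℝ) (hσ : HasDerivAt σ s 0) (hσ0 : σ 0 = 0)
    (x : Fin n → Fin p₁ → ℝ) (y : Fin n → ℝ)
    (ybar : ℝ)
    (hy : y ≠ fun _ => ybar)
    (w₂ : Fin p₂ → ℝ)
    (G : Fin p₂ → Fin p₁ → ℝ)
    (hG : ∀ j k, G j k = -s * (w₂ j / Real.sqrt (∑ j', (w₂ j') ^ 2)) *
        (∑ i, x i k * (y i - ybar)) / Real.sqrt (∑ i, (y i - ybar) ^ 2)) :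
    ∃ L' : (Fin p₂ → Fin p₁ → ℝ) →L[ℝ] ℝ,
      (∀ W, L' W = ∑ j, ∑ k, G j k * W j k) ∧
      HasFDerivAt (fun W₁ : Fin p₂ → Fin p₁ → ℝ =>
        Real.sqrt (∑ i, (y i - (ybar +
          (∑ j, w₂ j * σ (∑ k, W₁ j k * x i k)) / Real.sqrt (∑ j, (w₂ j) ^ 2))) ^ 2))
        L' 0 := by
  set c := √(∑ j, w₂ j ^ 2)
  have hresidual : ∀ i, HasFDerivAt
      (fun W : Fin p₂ → Fin p₁ → ℝ => y i - (ybar + (∑ j, w₂ j * σ (∑ k, W j k * x i k)) / c))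
      (-(c⁻¹ • frobeniusPairing fun j k => w₂ j * s * x i k)) 0 := fun i => by
    have hout := hasFDerivAt_dotProduct_activation_mulVec (σ := σ) (σ' := fun _ => s) w₂ (x i) 0
      (by simpa using fun _ => hσ)
    simpa [div_eq_mul_inv, mul_comm _ c⁻¹] using
      ((hout.const_mul c⁻¹).const_add ybar).const_sub (y i)
  have hy_sq : ∑ i, (y i - ybar) ^ 2 ≠ 0 := fun h => hy <| funext fun i => by
    have := (sum_eq_zero_iff_of_nonneg fun i _ => sq_nonneg (y i - ybar)).1 h i (mem_univ i)
    simpa [sub_eq_zero] using this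
  refine ⟨frobeniusPairing G, frobeniusPairing_apply G, ?_⟩
  refine (HasFDerivAt.sqrt_sum_sq hresidual (by simpa [hσ0] using hy_sq)).congr_fderiv ?_
  ext W
  simp only [Pi.zero_apply, zero_mul, sum_const_zero, hσ0, mul_zero, zero_div, add_zero, smul_neg,
    sum_neg_distrib, neg_apply, smul_apply, _root_.sum_apply, frobeniusPairing_apply, smul_eq_mul,
    hG]
  simp only [mul_sum, sum_mul, sum_div, ← sum_neg_distrib]
  rw [sum_comm]
  refine sum_congr rfl fun j _ => ?_
  rw [sum_comm]
  exact sum_congr rfl fun k _ => sum_congr rfl fun i _ => by ring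

/-- Gradient formula for the square-root ℓ2 loss of the two-layer
network at the zero first-layer weight matrix.  `L(W₁) = ‖y − μ_{W₁}(xᵢ)‖₂` with
`μ_{W₁}(x) = ȳ + ⟨w₂, σ(W₁ x)⟩ / ‖w₂‖₂` is differentiable at the zero matrix,
with gradient matrix `G` given entrywise by
`G j k = −σ'(0) · (w₂ⱼ/‖w₂‖₂) · (∑ᵢ x_{i,k}(yᵢ − ȳ)) / ‖y − ȳ·1‖₂`
(the derivative being the linear map `W ↦ ∑ j k, G j k * W j k`). -/
theorem gradient_sqrt_l2_loss_at_zero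
    (n p₁ p₂ : ℕ)
    (σ : ℝ → ℝ) (s : ℝ) (hσ : HasDerivAt σ s 0) (hσ0 : σ 0 = 0)
    (x : Fin n → Fin p₁ → ℝ) (y : Fin n → ℝ)
    (ybar : ℝ) (hybar : ybar = (∑ i, y i) / n)
    (hy : y ≠ fun _ => ybar)
    (w₂ : Fin p₂ → ℝ) (hw₂ : w₂ ≠ 0)
    (G : Fin p₂ → Fin p₁ → ℝ)
    (hG : ∀ j k, G j k = -s * (w₂ j / Real.sqrt (∑ j', (w₂ j') ^ 2)) *
        (∑ i, x i k * (y i - ybar)) / Real.sqrt (∑ i, (y i - ybar) ^ 2)) :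
    ∃ L' : (Fin p₂ → Fin p₁ → ℝ) →L[ℝ] ℝ,
      (∀ W, L' W = ∑ j, ∑ k, G j k * W j k) ∧
      HasFDerivAt (fun W₁ : Fin p₂ → Fin p₁ → ℝ =>
        Real.sqrt (∑ i, (y i - (ybar +
          (∑ j, w₂ j * σ (∑ k, W₁ j k * x i k)) / Real.sqrt (∑ j, (w₂ j) ^ 2))) ^ 2))
        L' 0 :=
  gradient_sqrt_l2_loss_at_zero_general n p₁ p₂ σ s hσ hσ0 x y ybar hy w₂ G hG
end

section
/- Let n ≥ 2, fix σ'(0) > 0 and training inputs x₁,…,x_n ∈ ℝ^{p₁}, and define Λ : ℝⁿ → ℝ by Λ(y) = σ'(0) · max_{k=1,…,p₁} |∑_{i=1}^n x_{i,k}(yᵢ − ȳ)| / ‖y − ȳ·1‖₂ for y ≠ ȳ·1 (where ȳ = (1/n)∑ᵢ yᵢ and 1 is the all-ones vector), and Λ(y) = 0 for y = ȳ·1. For b ∈ ℝ and ξ > 0, let P_{b,ξ} be the product on ℝⁿ of n independent N(b, ξ²) Gaussian distributions. Then the pushforward of P_{b,ξ} under Λ (the law of the statistic Λ(Y) for Y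 ~ P_{b,ξ}) is the same for all b ∈ ℝ and ξ > 0. -/
open MeasureTheory ProbabilityTheory

/-! `Λ` is invariant under every affine map `y ↦ ξ • y + b • 1` with `ξ ≠ 0`: centring removes
`b`, and numerator and denominator both scale by `|ξ|`. Since `N(b, ξ²)^⊗n` is the image of
`N(0, 1)^⊗n` under that map, the law of `Λ` under `N(b, ξ²)^⊗n` equals its law under
`N(0, 1)^⊗n`. -/

/-- The statistic `Λ(y) = σ'(0) · max_k |∑ᵢ x_{i,k}(yᵢ − ȳ)| / ‖y − ȳ·1‖₂`
(with `ȳ = (1/n)∑ᵢ yᵢ`; for `p₁ > 0` the `⨆` over `Fin p₁` is the maximum over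
`k = 1,…,p₁`).  When `y = ȳ·1` both the numerator sums and the denominator vanish
and, by the division-by-zero convention, `Λ(y) = 0`, matching the piecewise
definition. -/
noncomputable def lamStat (n p₁ : ℕ) (s : ℝ) (x : Fin n → Fin p₁ → ℝ)
    (y : Fin n → ℝ) : ℝ :=
  s * (⨆ k : Fin p₁, |∑ i, x i k * (y i - (∑ j, y j) / n)|) /
    Real.sqrt (∑ i, (y i - (∑ j, y j) / n) ^ 2)

lemma gaussianReal_map_std_affine (b ξ : ℝ) :
    (gaussianReal 0 1).map (fun y => ξ * y + b) = gaussianReal b ⟨ξ ^ 2, sq_nonneg ξ⟩ := by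
  rw [show (fun y => ξ * y + b) = (· + b) ∘ (ξ * ·) from rfl,
    ← Measure.map_map (measurable_add_const b) (measurable_const_mul ξ),
    gaussianReal_map_const_mul, gaussianReal_map_add_const, mul_zero, zero_add, mul_one]
  rfl

lemma pi_gaussianReal_eq_map_std (ι : Type*) [Fintype ι] (b ξ : ℝ) :
    Measure.pi (fun _ : ι => gaussianReal b ⟨ξ ^ 2, sq_nonneg ξ⟩)
      = (Measure.pi fun _ : ι => gaussianReal 0 1).map (fun y i => ξ * y i + b) := by
  rw [Measure.pi_map_pi (f := fun _ y => ξ * y + b) fun _ => by fun_prop]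
  simp only [gaussianReal_map_std_affine]

lemma sub_mean_affine {n : ℕ} (y : Fin n → ℝ) (ξ b : ℝ) (i : Fin n) :
    ξ * y i + b - (∑ j, (ξ * y j + b)) / n = ξ * (y i - (∑ j, y j) / n) := by
  have : (n : ℝ) ≠ 0 := Nat.cast_ne_zero.mpr i.pos.ne'
  rw [Finset.sum_add_distrib, ← Finset.mul_sum, Finset.sum_const, Finset.card_univ,
    Fintype.card_fin, nsmul_eq_mul]
  field_simp
  ring

lemma lamStat_affine (n p₁ : ℕ) (s : ℝ) (x : Fin n → Fin p₁ → ℝ) {ξ : ℝ} (hξ : ξ ≠ 0)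
    (b : ℝ) (y : Fin n → ℝ) :
    lamStat n p₁ s x (fun i => ξ * y i + b) = lamStat n p₁ s x y := by
  simp only [lamStat, sub_mean_affine, mul_left_comm _ ξ, ← Finset.mul_sum, abs_mul, mul_pow,
    ← Real.mul_iSup_of_nonneg (abs_nonneg ξ), Real.sqrt_mul (sq_nonneg ξ), Real.sqrt_sq_eq_abs]
  rw [mul_left_comm, mul_div_mul_left _ _ (abs_ne_zero.mpr hξ)]

lemma measurable_lamStat (n p₁ : ℕ) (s : ℝ) (x : Fin n → Fin p₁ → ℝ) :
    Measurable (lamStat n p₁ s x) := by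
  unfold lamStat
  refine ((Measurable.iSup fun k => ?_).const_mul s).div (by fun_prop)
  fun_prop

lemma map_lamStat_pi_gaussianReal (n p₁ : ℕ) (s : ℝ) (x : Fin n → Fin p₁ → ℝ) (b : ℝ)
    {ξ : ℝ} (hξ : ξ ≠ 0) :
    (Measure.pi fun _ : Fin n => gaussianReal b ⟨ξ ^ 2, sq_nonneg ξ⟩).map (lamStat n p₁ s x)
      = (Measure.pi fun _ : Fin n => gaussianReal 0 1).map (lamStat n p₁ s x) := by
  rw [pi_gaussianReal_eq_map_std, Measure.map_map (measurable_lamStat n p₁ s x) (by fun_prop)]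
  congr 1
  funext y
  exact lamStat_affine n p₁ s x hξ b y

theorem lamStat_pushforward_pivotal_general
    (n p₁ : ℕ)
    (s : ℝ) (x : Fin n → Fin p₁ → ℝ)
    (b₁ ξ₁ b₂ ξ₂ : ℝ) (hξ₁ : 0 < ξ₁) (hξ₂ : 0 < ξ₂) :
    (Measure.pi fun _ : Fin n =>
        gaussianReal b₁ ⟨ξ₁ ^ 2, sq_nonneg ξ₁⟩).map (lamStat n p₁ s x)
      = (Measure.pi fun _ : Fin n =>
        gaussianReal b₂ ⟨ξ₂ ^ 2, sq_nonneg ξ₂⟩).map (lamStat n p₁ s x) := by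
  rw [map_lamStat_pi_gaussianReal n p₁ s x b₁ hξ₁.ne',
    map_lamStat_pi_gaussianReal n p₁ s x b₂ hξ₂.ne']

/-- the statistic `Λ` is pivotal: for `n ≥ 2`, its law under the
product of `n` independent `N(b, ξ²)` Gaussians is the same for all `b ∈ ℝ` and
`ξ > 0`. -/
theorem lamStat_pushforward_pivotal
    (n p₁ : ℕ) (hn : 2 ≤ n) (hp₁ : 0 < p₁)
    (s : ℝ) (hs : 0 < s) (x : Fin n → Fin p₁ → ℝ)
    (b₁ ξ₁ b₂ ξ₂ : ℝ) (hξ₁ : 0 < ξ₁) (hξ₂ : 0 < ξ₂) :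
    (Measure.pi fun _ : Fin n =>
        gaussianReal b₁ ⟨ξ₁ ^ 2, sq_nonneg ξ₁⟩).map (lamStat n p₁ s x)
      = (Measure.pi fun _ : Fin n =>
        gaussianReal b₂ ⟨ξ₂ ^ 2, sq_nonneg ξ₂⟩).map (lamStat n p₁ s x) :=
  lamStat_pushforward_pivotal_general n p₁ s x b₁ ξ₁ b₂ ξ₂ hξ₁ hξ₂
end
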